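/- arXiv:2503.23756 — 2 statements merged into one kernel-verified Lean document; each statement's English description precedes it below -/
import Mathlib

section
/- For any positive definite Hermitian matrix H and any Hermitian matrix A, the matrix H·exp(t·H⁻¹A) is positive definite Hermitian for every real t, and it equals exp(t·A·H⁻¹)·H. -/
/-!
Write `H = Bᴴ B` with `B` invertible. Conjugating by `B` gives
`H exp(H⁻¹ C) = Bᴴ exp(B⁻ᴴ C B⁻¹) B`, a congruence transform of the exponential of a Hermitian
matrix, and `exp N = exp(N/2)ᴴ exp(N/2)` is positive definite for Hermitian `N`. The identity
`H exp(H⁻¹ C) = exp(C H⁻¹) H` is conjugation invariance of `exp`.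
-/

open scoped ComplexOrder

namespace Matrix

section Conj

variable {m 𝔸 : Type*} [Fintype m] [DecidableEq m]
  [NormedCommRing 𝔸] [NormedAlgebra ℚ 𝔸] [CompleteSpace 𝔸]

theorem mul_exp_inv_mul {P : Matrix m m 𝔸} (hP : IsUnit P) (C : Matrix m m 𝔸) :
    P * NormedSpace.exp (P⁻¹ * C) = NormedSpace.exp (C * P⁻¹) * P := by
  have hPdet := (isUnit_iff_isUnit_det P).mp hP
  rw [show C * P⁻¹ = P * (P⁻¹ * C) * P⁻¹ by
      rw [← Matrix.mul_assoc, mul_nonsing_inv P hPdet, Matrix.one_mul],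
    exp_conj P _ hP, Matrix.mul_assoc _ P⁻¹ P, nonsing_inv_mul P hPdet, Matrix.mul_one]

theorem mul_mul_exp_inv_mul (Q : Matrix m m 𝔸) {B : Matrix m m 𝔸} (hB : IsUnit B)
    (C : Matrix m m 𝔸) :
    Q * B * NormedSpace.exp ((Q * B)⁻¹ * C) = Q * NormedSpace.exp (Q⁻¹ * C * B⁻¹) * B := by
  have hBdet := (isUnit_iff_isUnit_det B).mp hB
  rw [show (Q * B)⁻¹ * C = B⁻¹ * (Q⁻¹ * C * B⁻¹) * B by
      simp only [Matrix.mul_inv_rev, Matrix.mul_assoc, nonsing_inv_mul B hBdet, Matrix.mul_one],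
    exp_conj' B _ hB]
  simp only [← Matrix.mul_assoc, Matrix.mul_assoc Q B B⁻¹, mul_nonsing_inv B hBdet,
    Matrix.mul_one]

end Conj

variable {n 𝕜 : Type*} [Fintype n] [DecidableEq n] [RCLike 𝕜]

theorem PosDef.exists_isUnit_eq_conjTranspose_mul_self {H : Matrix n n 𝕜} (hH : H.PosDef) :
    ∃ B : Matrix n n 𝕜, IsUnit B ∧ H = Bᴴ * B := by
  open scoped MatrixOrder in
  obtain ⟨B, rfl⟩ := CStarAlgebra.nonneg_iff_eq_star_mul_self.mp hH.posSemidef.nonneg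
  exact ⟨B, isUnit_of_mul_isUnit_right hH.isUnit, rfl⟩

theorem IsHermitian.posDef_exp {M : Matrix n n 𝕜} (hM : M.IsHermitian) :
    (NormedSpace.exp M).PosDef := by
  set E := NormedSpace.exp ((2⁻¹ : ℝ) • M)
  have hE : Eᴴ = E := (hM.smul (IsSelfAdjoint.all _)).exp
  have hM_eq : NormedSpace.exp M = Eᴴ * E := by
    rw [hE, ← exp_add_of_commute _ _ (Commute.refl _), ← add_smul]
    norm_num
  rw [hM_eq]
  exact PosDef.conjTranspose_mul_self E (mulVec_injective_iff_isUnit.mpr (isUnit_exp _))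

theorem PosDef.mul_exp_inv_mul {H C : Matrix n n 𝕜} (hH : H.PosDef) (hC : C.IsHermitian) :
    (H * NormedSpace.exp (H⁻¹ * C)).PosDef := by
  obtain ⟨B, hB, rfl⟩ := hH.exists_isUnit_eq_conjTranspose_mul_self
  rw [mul_mul_exp_inv_mul _ hB, ← conjTranspose_nonsing_inv]
  exact (isHermitian_conjTranspose_mul_mul _ hC).posDef_exp.conjTranspose_mul_mul_same
    (mulVec_injective_iff_isUnit.mpr hB)

end Matrix

/-- For a positive definite Hermitian matrix `H`, a Hermitian matrix `A` and any real `t`,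
the matrix `H * exp(t • H⁻¹A)` is positive definite Hermitian, and it equals
`exp(t • A H⁻¹) * H`. -/
theorem posDef_mul_exp {r : ℕ} (H A : Matrix (Fin r) (Fin r) ℂ)
    (hH : H.PosDef) (hA : A.IsHermitian) (t : ℝ) :
    (H * NormedSpace.exp ((t : ℂ) • (H⁻¹ * A))).PosDef ∧
      H * NormedSpace.exp ((t : ℂ) • (H⁻¹ * A)) =
        NormedSpace.exp ((t : ℂ) • (A * H⁻¹)) * H := by
  rw [← Matrix.mul_smul, ← Matrix.smul_mul]
  exact ⟨hH.mul_exp_inv_mul (hA.smul (Complex.conj_ofReal t)),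
    Matrix.mul_exp_inv_mul hH.isUnit _⟩
end

section
/- For any two positive definite Hermitian matrices P and Q, there exists a unique Hermitian matrix A such that exp(P⁻¹A) = P⁻¹Q. -/
/-!
Write `P = T * T` with `T = √P` positive definite. Congruence `S ↦ T * S * T` permutes the
Hermitian matrices, and `exp (P⁻¹ * (T * S * T)) = T⁻¹ * exp S * T`, so the equation for
`A = T * S * T` becomes `exp S = T⁻¹ * Q * T⁻¹`. The right-hand side is positive definite, and
`exp` is a bijection from Hermitian onto positive definite matrices, inverted by the logarithm
of the continuous functional calculus.
-/

open Matrix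
open scoped ComplexOrder

namespace Matrix

variable {𝕜 n : Type*} [RCLike 𝕜] [Fintype n] [DecidableEq n]

theorem existsUnique_isHermitian_exp_eq {R : Matrix n n ℂ} (hR : R.PosDef) :
    ∃! S : Matrix n n ℂ, S.IsHermitian ∧ NormedSpace.exp S = R := by
  open scoped Matrix.Norms.L2Operator MatrixOrder in
  exact ⟨CFC.log R, ⟨IsSelfAdjoint.log, CFC.exp_log R hR.isStrictlyPositive⟩,
    fun S ⟨hS, hSR⟩ => hSR ▸ (CFC.log_exp S hS).symm⟩

theorem PosDef.exists_posDef_mul_self_eq {P : Matrix n n 𝕜} (hP : P.PosDef) :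
    ∃ T : Matrix n n 𝕜, T.PosDef ∧ T * T = P := by
  open scoped MatrixOrder in
  exact ⟨CFC.sqrt P, hP.isStrictlyPositive.sqrt.posDef,
    CFC.sqrt_mul_sqrt_self P hP.posSemidef.nonneg⟩

theorem exp_inv_mul_congr_eq_inv_mul_iff {T : Matrix n n 𝕜} (hT : IsUnit T)
    (X Y : Matrix n n 𝕜) :
    NormedSpace.exp ((T * T)⁻¹ * (T * X * T)) = (T * T)⁻¹ * Y ↔
      NormedSpace.exp X = T⁻¹ * Y * T⁻¹ := by
  have hdet : IsUnit T.det := (isUnit_iff_isUnit_det T).1 hT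
  have hX : (T * T)⁻¹ * (T * X * T) = T⁻¹ * X * T := by
    simp [mul_inv_rev, mul_assoc, nonsing_inv_mul_cancel_left _ _ hdet]
  have hY : (T * T)⁻¹ * Y = T⁻¹ * (T⁻¹ * Y * T⁻¹) * T := by
    simp [mul_inv_rev, mul_assoc, nonsing_inv_mul _ hdet]
  rw [hX, hY, exp_conj' T X hT, hT.mul_left_inj, (isUnit_nonsing_inv_iff.2 hT).mul_right_inj]

end Matrix

/-- For positive definite Hermitian matrices `P` and `Q`, there exists a unique Hermitian
matrix `A` such that `exp(P⁻¹A) = P⁻¹Q`. -/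
theorem existsUnique_hermitian_exp_eq {r : ℕ} (P Q : Matrix (Fin r) (Fin r) ℂ)
    (hP : P.PosDef) (hQ : Q.PosDef) :
    ∃! A : Matrix (Fin r) (Fin r) ℂ,
      A.IsHermitian ∧ NormedSpace.exp (P⁻¹ * A) = P⁻¹ * Q := by
  obtain ⟨T, hT, rfl⟩ := hP.exists_posDef_mul_self_eq
  have hR : (T⁻¹ * Q * T⁻¹).PosDef := by
    have := (IsUnit.posDef_star_left_conjugate_iff (isUnit_nonsing_inv_iff.2 hT.isUnit)).2 hQ
    rwa [star_eq_conjTranspose, hT.inv.isHermitian.eq] at this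
  let congruence := (Units.mulLeft hT.isUnit.unit).trans (Units.mulRight hT.isUnit.unit)
  refine (congruence.existsUnique_congr fun S => ?_).mp (existsUnique_isHermitian_exp_eq hR)
  have hS : (T * S * T).IsHermitian ↔ S.IsHermitian := by
    simpa only [isHermitian_iff_isSelfAdjoint, hT.isHermitian.star_eq] using
      hT.isUnit.isSelfAdjoint_conjugate_iff' (a := S)
  show _ ↔ (T * S * T).IsHermitian ∧ NormedSpace.exp ((T * T)⁻¹ * (T * S * T)) = _
  rw [hS, exp_inv_mul_congr_eq_inv_mul_iff hT.isUnit]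
end
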